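/- arXiv:2005.01892 — 4 statements merged into one kernel-verified Lean document; each statement's English description precedes it below -/
import Mathlib

section
/- Let L > 0, let λ be the normalized Lebesgue measure on [0,L], let μ be the probability measure on [0,π] with μ(B) = (1/2)∫_B sin(θ) dθ, and let F : [0,L] × [0,π] → [0,L] × [0,π] be a measurable map preserving λ × μ, written F(s,θ) = (s_1(s,θ), θ_1(s,θ)). Then λ × μ is invariant for the random billiard map F̄(s,θ) = (s_1(s,θ), T_i(θ_1(s,θ))) applied with probability p_i(θ_1(s,θ)): for every Borel set E ⊆ [0,L] × [0,π], (λ×μ)(E) = Σ_{i=1}^4 ∬ 1_E(s_1(s,θ), T_i(θ_1(s,θ))) p_i(θ_1(s,θ)) dλ(s) dμ(θ). -/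
open Real MeasureTheory Set Filter Topology
open scoped ENNReal NNReal

noncomputable section

namespace RandomBilliard

/-- The four maps `T_1, …, T_4` of the Feres random map
(index `i : Fin 4` stands for `T_{i+1}`). -/
def T (α : ℝ) : Fin 4 → ℝ → ℝ
  | 0 => fun θ => θ + 2 * α
  | 1 => fun θ => -θ + 2 * π - 4 * α
  | 2 => fun θ => θ - 2 * α
  | 3 => fun θ => -θ + 4 * α

/-- `u_a(θ) = (1/2)(1 + tan a / tan θ)`. -/
def u (a θ : ℝ) : ℝ := 1 / 2 * (1 + Real.tan a / Real.tan θ)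

/-- The probabilities `p_1, …, p_4` of the Feres random map
(index `i : Fin 4` stands for `p_{i+1}`). -/
def p (α : ℝ) : Fin 4 → ℝ → ℝ
  | 0 => fun θ =>
      if θ < α then 1
      else if θ < π - 3 * α then u α θ
      else if θ < π - 2 * α then 2 * Real.cos (2 * α) * u (2 * α) θ
      else 0
  | 1 => fun θ =>
      if θ < π - 3 * α then 0
      else if θ < π - 2 * α then u α θ - 2 * Real.cos (2 * α) * u (2 * α) θ
      else if θ < π - α then u α θ
      else 0
  | 2 => fun θ =>
      if θ < 2 * α then 0
      else if θ < 3 * α then 2 * Real.cos (2 * α) * u (2 * α) (-θ)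
      else if θ < π - α then u α (-θ)
      else 1
  | 3 => fun θ =>
      if θ < α then 0
      else if θ < 2 * α then u α (-θ)
      else if θ < 3 * α then u α (-θ) - 2 * Real.cos (2 * α) * u (2 * α) (-θ)
      else 0

/-- `iterT α x k θ = T_x^{(k)}(θ) = T_{x_k} ∘ ⋯ ∘ T_{x_1}(θ)`
(the term `x j : Fin 4` stands for the symbol `x_{j+1}`). -/
def iterT (α : ℝ) (x : ℕ → Fin 4) : ℕ → ℝ → ℝ
  | 0 => fun θ => θ
  | k + 1 => fun θ => T α (x k) (iterT α x k θ)

/-- `Σ_θ`: the admissible symbol sequences for `θ`, i.e. those whose every finite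
prefix has positive probability. -/
def SigmaTheta (α θ : ℝ) : Set (ℕ → Fin 4) :=
  {x | ∀ k : ℕ, 0 < ∏ j ∈ Finset.range k, p α (x j) (iterT α x j θ)}

/-- `C(θ)`: all possible future images of `θ` under the Feres random map. -/
def Cset (α θ : ℝ) : Set ℝ :=
  {θ' | θ' ∈ Set.Ioo 0 π ∧
    ∃ (x : ℕ → Fin 4) (k : ℕ), x ∈ SigmaTheta α θ ∧ iterT α x k θ = θ'}

/-- The probability measure `μ(A) = (1/2) ∫_A sin θ dθ` on `[0, π]`. -/
def mu0 : Measure ℝ :=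
  (volume.restrict (Set.Icc 0 π)).withDensity fun θ => ENNReal.ofReal (1 / 2 * Real.sin θ)

/-- One step of the evolution of a measure under the Feres random map:
`(stepMeasure α ν)(A) = ∫ K(θ, A) dν(θ)`, where `K(θ, A) = Σ_i p_i(θ) 1_A(T_i θ)`. -/
def stepMeasure (α : ℝ) (ν : Measure ℝ) : Measure ℝ :=
  ∑ i : Fin 4, Measure.map (T α i) (ν.withDensity fun θ => ENNReal.ofReal (p α i θ))

/-- One step of the evolution of a measure under the random billiard map in the circle
`F̄(s, θ) = (s + 2 T_i(θ) mod 2π, T_i(θ))` with probability `p_i(θ)`. -/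
def circleStep (α : ℝ) (ν : Measure (ℝ × ℝ)) : Measure (ℝ × ℝ) :=
  ∑ i : Fin 4,
    Measure.map
      (fun q : ℝ × ℝ => (toIcoMod Real.two_pi_pos 0 (q.1 + 2 * T α i q.2), T α i q.2))
      (ν.withDensity fun q => ENNReal.ofReal (p α i q.2))

/-- The transition kernel `K(θ', ·) = Σ_i p_i(θ') δ_{T_i(θ')}` of the Feres random map. -/
def feresKernel (α : ℝ) (t : ℝ) : Measure ℝ :=
  ∑ i : Fin 4, ENNReal.ofReal (p α i t) • Measure.dirac (T α i t)

/-- `k`-step iterates of a transition kernel. -/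
def kerIterate (κ : ℝ → Measure ℝ) : ℕ → ℝ → Measure ℝ
  | 0 => fun t => Measure.dirac t
  | k + 1 => fun t => (κ t).bind (kerIterate κ k)

/-- The probability that a Markov chain with kernel `κ` started at `t` satisfies
`θ_0 ∈ B 0, …, θ_n ∈ B n`. -/
def cylProb (κ : ℝ → Measure ℝ) : ℕ → (ℕ → Set ℝ) → ℝ → ℝ≥0∞
  | 0 => fun B t => Set.indicator (B 0) (fun _ => (1 : ℝ≥0∞)) t
  | n + 1 => fun B t =>
      Set.indicator (B 0)
        (fun _ => ∫⁻ t', cylProb κ n (fun k => B (k + 1)) t' ∂(κ t)) t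

/-- `ν` is the Markov path measure on `ℕ → ℝ` (given by the Ionescu–Tulcea construction)
with initial distribution `ρ` and transition kernel `κ`, characterized by its values
on cylinder sets. -/
def IsMarkovPathMeasure (κ : ℝ → Measure ℝ) (ρ : Measure ℝ) (ν : Measure (ℕ → ℝ)) : Prop :=
  ∀ (n : ℕ) (B : ℕ → Set ℝ), (∀ k, MeasurableSet (B k)) →
    ν {ω | ∀ k ≤ n, ω k ∈ B k} = ∫⁻ t, cylProb κ n B t ∂ρ

/-- The shift map on sequences. -/
def shift : (ℕ → ℝ) → ℕ → ℝ := fun ω n => ω (n + 1)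

/-- Aperiodicity of the Markov chain with kernel `κ` on the state space `S`:
for every state, every common divisor of the return times having positive
probability equals `1` (i.e. every state has period 1). -/
def AperiodicChain (κ : ℝ → Measure ℝ) (S : Set ℝ) : Prop :=
  ∀ t ∈ S, ∀ d : ℕ, (∀ k : ℕ, 1 ≤ k → 0 < kerIterate κ k t {t} → d ∣ k) → d = 1

end RandomBilliard

/-! The Feres random map is reversible with respect to `μ`. The maps `T₁, T₃` are mutually
inverse translations and `T₂, T₄` are involutions; writing `ī` for the index of `T_i⁻¹`, one has
detailed balance `sin θ · p_i(θ) = sin (T_i θ) · p_ī(T_i θ)` on `[0, π]`. It is checked interval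
by interval, because on each interval `sin θ · p_i(θ)` is a single sine (`flux`). Hence `T_i`
pushes `p_i μ` forward to `p_ī μ`, and since `Σ p_i = 1` the random map preserves `μ`. The theorem
then follows by Fubini in `s` and the invariance of `λ × μ` under `F`. -/

namespace MeasureTheory

lemma map_withDensity_of_measurePreserving {X : Type*} [MeasurableSpace X] {μ : Measure X}
    {T S : X → X} (hT : Measurable T) (hS : MeasurePreserving S μ μ)
    (hTS : Function.LeftInverse T S) {f : X → ℝ≥0∞} (hf : Measurable f) :
    (μ.withDensity f).map T = μ.withDensity (f ∘ S) := by
  ext A hA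
  rw [Measure.map_apply hT hA, withDensity_apply _ (hT hA), withDensity_apply _ hA,
    ← hS.setLIntegral_comp_preimage (hT hA) hf, ← preimage_comp, hTS.comp_eq_id, preimage_id]
  rfl

lemma withDensity_finsetSum {ι X : Type*} [MeasurableSpace X] (μ : Measure X) (s : Finset ι)
    {f : ι → X → ℝ≥0∞} (hf : ∀ i ∈ s, Measurable (f i)) :
    μ.withDensity (fun x => ∑ i ∈ s, f i x) = ∑ i ∈ s, μ.withDensity (f i) := by
  ext A hA
  rw [withDensity_apply _ hA, Measure.finsetSum_apply, lintegral_finsetSum _ hf]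
  simp only [withDensity_apply _ hA]

lemma MeasurePreserving.lintegral_lintegral_comp {X Y : Type*} [MeasurableSpace X]
    [MeasurableSpace Y] {μ : Measure X} {ν : Measure Y} [SFinite μ] [SFinite ν]
    {F : X × Y → X × Y} (hF : MeasurePreserving F (μ.prod ν) (μ.prod ν))
    {f : X × Y → ℝ≥0∞} (hf : Measurable f) :
    ∫⁻ y, ∫⁻ x, f (F (x, y)) ∂μ ∂ν = ∫⁻ z, f z ∂μ.prod ν := by
  rw [← lintegral_lintegral_swap (f := fun x y => f (F (x, y)))
    (hf.comp hF.measurable).aemeasurable, ← hF.lintegral_comp hf]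
  exact (lintegral_prod _ (hf.comp hF.measurable).aemeasurable).symm

end MeasureTheory

namespace RandomBilliard

lemma swap_zero_two_one : Equiv.swap (0 : Fin 4) 2 1 = 1 := by decide

lemma swap_zero_two_three : Equiv.swap (0 : Fin 4) 2 3 = 3 := by decide

lemma u_add_u_neg (a θ : ℝ) : u a θ + u a (-θ) = 1 := by
  rw [u, u, tan_neg, div_neg]; ring

lemma sin_mul_u {a θ : ℝ} (ha : cos a ≠ 0) (hθ : sin θ ≠ 0) :
    sin θ * u a θ = sin (θ + a) / (2 * cos a) := by
  rw [u, tan_eq_sin_div_cos θ, div_div_eq_mul_div, tan_eq_sin_div_cos, sin_add]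
  field_simp

lemma sin_mul_u_neg {a θ : ℝ} (ha : cos a ≠ 0) (hθ : sin θ ≠ 0) :
    sin θ * u a (-θ) = sin (θ - a) / (2 * cos a) := by
  have h := sin_mul_u ha (θ := -θ) (by rwa [sin_neg, neg_ne_zero])
  rw [sin_neg, show -θ + a = -(θ - a) by ring, sin_neg] at h
  linear_combination -h

def flux (α : ℝ) : Fin 4 → ℝ → ℝ
  | 0 => fun θ =>
      if θ < α then sin θ
      else if θ < π - 3 * α then sin (θ + α) / (2 * cos α)
      else if θ < π - 2 * α then sin (θ + 2 * α)
      else 0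
  | 1 => fun θ =>
      if θ < π - 3 * α then 0
      else if θ < π - 2 * α then sin (θ + 3 * α - π) / (2 * cos α)
      else if θ < π - α then sin (π - α - θ) / (2 * cos α)
      else 0
  | 2 => fun θ =>
      if θ < 2 * α then 0
      else if θ < 3 * α then sin (θ - 2 * α)
      else if θ < π - α then sin (θ - α) / (2 * cos α)
      else sin θ
  | 3 => fun θ =>
      if θ < α then 0
      else if θ < 2 * α then sin (θ - α) / (2 * cos α)
      else if θ < 3 * α then sin (3 * α - θ) / (2 * cos α)
      else 0

lemma sin_sub_add_sin_add (x a : ℝ) : sin (x - a) + sin (x + a) = 2 * cos a * sin x := by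
  rw [sin_sub, sin_add]; ring

lemma sin_mul_p {α : ℝ} (hα : α ∈ Ioo 0 (π / 6)) (i : Fin 4) (θ : ℝ) :
    sin θ * p α i θ = flux α i θ := by
  obtain ⟨hα0, hα6⟩ := hα
  have hc : cos α ≠ 0 := (cos_pos_of_mem_Ioo ⟨by linarith, by linarith⟩).ne'
  have hc2 : cos (2 * α) ≠ 0 := (cos_pos_of_mem_Ioo ⟨by linarith, by linarith⟩).ne'
  have hs : ∀ θ, 0 < θ → θ < π → sin θ ≠ 0 := fun θ h0 hπ => (sin_pos_of_pos_of_lt_pi h0 hπ).ne'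
  have h2u : ∀ θ, sin θ ≠ 0 → sin θ * (2 * cos (2 * α) * u (2 * α) θ) = sin (θ + 2 * α) := by
    intro θ h; rw [mul_left_comm, sin_mul_u hc2 h]; field_simp
  have h2u' : ∀ θ, sin θ ≠ 0 → sin θ * (2 * cos (2 * α) * u (2 * α) (-θ)) = sin (θ - 2 * α) := by
    intro θ h; rw [mul_left_comm, sin_mul_u_neg hc2 h]; field_simp
  fin_cases i <;> simp only [p, flux] <;> split_ifs <;> try simp only [mul_one, mul_zero]
  · exact sin_mul_u hc (hs θ (by linarith) (by linarith))
  · exact h2u θ (hs θ (by linarith) (by linarith))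
  · have h := hs θ (by linarith) (by linarith)
    have e := sin_sub_add_sin_add (θ + 2 * α) α
    rw [mul_sub, sin_mul_u hc h, h2u θ h, sin_sub_pi, show θ + 3 * α = θ + 2 * α + α by ring,
      show θ + α = θ + 2 * α - α by ring]
    field_simp
    linear_combination e
  · rw [sin_mul_u hc (hs θ (by linarith) (by linarith)), ← sin_pi_sub]; ring_nf
  · exact h2u' θ (hs θ (by linarith) (by linarith))
  · exact sin_mul_u_neg hc (hs θ (by linarith) (by linarith))
  · exact sin_mul_u_neg hc (hs θ (by linarith) (by linarith))
  · have h := hs θ (by linarith) (by linarith)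
    have e := sin_sub_add_sin_add (θ - 2 * α) α
    rw [mul_sub, sin_mul_u_neg hc h, h2u' θ h, show 3 * α - θ = -(θ - 2 * α - α) by ring, sin_neg,
      show θ - α = θ - 2 * α + α by ring]
    field_simp
    linear_combination e

lemma sum_p_eq_one {α : ℝ} (h0 : 0 ≤ α) (h6 : α ≤ π / 6) (θ : ℝ) : ∑ i, p α i θ = 1 := by
  have := u_add_u_neg α θ
  simp only [Fin.sum_univ_four, p]
  split_ifs <;> linarith

lemma flux_nonneg {α : ℝ} (hα : α ∈ Ioo 0 (π / 6)) (i : Fin 4) {θ : ℝ} (hθ : θ ∈ Icc 0 π) :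
    0 ≤ flux α i θ := by
  obtain ⟨hα0, hα6⟩ := hα
  obtain ⟨hθ0, hθπ⟩ := hθ
  have hc : 0 < 2 * cos α := by linarith [cos_pos_of_mem_Ioo (x := α) ⟨by linarith, by linarith⟩]
  have hsin : ∀ x, 0 ≤ x → x ≤ π → 0 ≤ sin x := fun x => sin_nonneg_of_nonneg_of_le_pi
  fin_cases i <;> simp only [flux] <;> split_ifs <;>
    first
    | exact le_rfl
    | exact hsin _ (by linarith) (by linarith)
    | exact div_nonneg (hsin _ (by linarith) (by linarith)) hc.le

lemma p_nonneg {α : ℝ} (hα : α ∈ Ioo 0 (π / 6)) (i : Fin 4) (θ : ℝ) : 0 ≤ p α i θ := by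
  by_cases hθ : θ ∈ Ioo 0 π
  · refine nonneg_of_mul_nonneg_right ?_ (sin_pos_of_pos_of_lt_pi hθ.1 hθ.2)
    rw [sin_mul_p hα]
    exact flux_nonneg hα i (Ioo_subset_Icc_self hθ)
  · obtain ⟨hα0, hα6⟩ := hα
    rw [mem_Ioo, not_and_or, not_lt, not_lt] at hθ
    fin_cases i <;> simp only [p] <;> split_ifs <;> rcases hθ with hθ | hθ <;> linarith

lemma indicator_flux_T_swap {α : ℝ} (hα : α ∈ Ioo 0 (π / 6)) (i : Fin 4) (t : ℝ) :
    (Icc 0 π).indicator (flux α i) (T α (Equiv.swap 0 2 i) t)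
      = (Icc 0 π).indicator (flux α (Equiv.swap 0 2 i)) t := by
  obtain ⟨hα0, hα6⟩ := hα
  fin_cases i <;>
    simp only [Fin.zero_eta, Fin.mk_one, Fin.reduceFinMk, Equiv.swap_apply_left,
      Equiv.swap_apply_right, swap_zero_two_one, swap_zero_two_three, T, flux, indicator, mem_Icc,
      ite_and] <;>
    split_ifs
  all_goals try first | linarith | (ring_nf; done)
  -- the remaining cases are the breakpoints, where both one-sided formulas agree
  · obtain rfl : t = π := by linarith
    simp
  · obtain rfl : t = π - α := by linarith
    ring_nf; simp
  · obtain rfl : t = π - 2 * α := by linarith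
    ring_nf
  · obtain rfl : t = π - 3 * α := by linarith
    ring_nf; simp
  · obtain rfl : t = π - 2 * α := by linarith
    ring_nf; simp
  · obtain rfl : t = 3 * α := by linarith
    ring_nf; simp
  · obtain rfl : t = 2 * α := by linarith
    ring_nf
  · obtain rfl : t = α := by linarith
    ring_nf; simp

lemma measurable_u (a : ℝ) : Measurable (u a) := by
  have htan : Measurable tan := by
    rw [show tan = fun x => sin x / cos x from funext tan_eq_sin_div_cos]; fun_prop
  unfold u; fun_prop

lemma measurable_p (α : ℝ) (i : Fin 4) : Measurable (p α i) := by
  have := measurable_u α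
  have := measurable_u (2 * α)
  fin_cases i <;> simp only [p] <;>
    repeat
      first
      | apply Measurable.ite (measurableSet_lt measurable_id measurable_const)
      | fun_prop

lemma measurable_flux {α : ℝ} (hα : α ∈ Ioo 0 (π / 6)) (i : Fin 4) : Measurable (flux α i) := by
  rw [← funext (sin_mul_p hα i)]
  exact measurable_sin.mul (measurable_p α i)

lemma measurePreserving_T (α : ℝ) (i : Fin 4) : MeasurePreserving (T α i) volume volume := by
  fin_cases i
  · exact measurePreserving_add_right volume (2 * α)
  · convert Measure.measurePreserving_sub_left volume (2 * π - 4 * α) using 1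
    funext θ; simp only [T]; ring
  · exact measurePreserving_sub_right volume (2 * α)
  · convert Measure.measurePreserving_sub_left volume (4 * α) using 1
    funext θ; simp only [T]; ring

lemma measurable_T (α : ℝ) (i : Fin 4) : Measurable (T α i) :=
  (measurePreserving_T α i).measurable

lemma T_swap_T (α : ℝ) (i : Fin 4) (θ : ℝ) : T α (Equiv.swap 0 2 i) (T α i θ) = θ := by
  fin_cases i <;>
    simp only [Fin.zero_eta, Fin.mk_one, Fin.reduceFinMk, Equiv.swap_apply_left,
      Equiv.swap_apply_right, swap_zero_two_one, swap_zero_two_three, T] <;>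
    ring

instance : SFinite mu0 := by
  unfold mu0; infer_instance

lemma mu0_withDensity_p {α : ℝ} (hα : α ∈ Ioo 0 (π / 6)) (i : Fin 4) :
    mu0.withDensity (fun θ => ENNReal.ofReal (p α i θ))
      = volume.withDensity (fun θ => ENNReal.ofReal ((Icc 0 π).indicator (flux α i) θ / 2)) := by
  rw [mu0, ← withDensity_mul _ (by fun_prop) (measurable_p α i).ennreal_ofReal,
    ← withDensity_indicator measurableSet_Icc]
  congr 1
  funext θ
  by_cases hθ : θ ∈ Icc 0 π
  · rw [indicator_of_mem hθ, indicator_of_mem hθ, ← sin_mul_p hα, Pi.mul_apply,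
      ← ENNReal.ofReal_mul (by linarith [sin_nonneg_of_nonneg_of_le_pi hθ.1 hθ.2])]
    ring_nf
  · simp [indicator_of_notMem hθ]

lemma map_T_mu0_withDensity_p {α : ℝ} (hα : α ∈ Ioo 0 (π / 6)) (i : Fin 4) :
    (mu0.withDensity fun θ => ENNReal.ofReal (p α i θ)).map (T α i)
      = mu0.withDensity fun θ => ENNReal.ofReal (p α (Equiv.swap 0 2 i) θ) := by
  have hinv (t : ℝ) : T α i (T α (Equiv.swap 0 2 i) t) = t := by
    simpa using T_swap_T α (Equiv.swap 0 2 i) t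
  rw [mu0_withDensity_p hα, mu0_withDensity_p hα,
    map_withDensity_of_measurePreserving (measurable_T α i) (measurePreserving_T α _) hinv
      (((measurable_flux hα i).indicator measurableSet_Icc).div_const 2).ennreal_ofReal]
  simp only [Function.comp_def, indicator_flux_T_swap hα]

theorem stepMeasure_mu0 {α : ℝ} (hα : α ∈ Ioo 0 (π / 6)) : stepMeasure α mu0 = mu0 := by
  have hsum (θ : ℝ) : ∑ i, ENNReal.ofReal (p α i θ) = 1 := by
    rw [← ENNReal.ofReal_sum_of_nonneg fun i _ => p_nonneg hα i θ,
      sum_p_eq_one hα.1.le hα.2.le, ENNReal.ofReal_one]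
  calc stepMeasure α mu0
      = ∑ i, mu0.withDensity fun θ => ENNReal.ofReal (p α (Equiv.swap 0 2 i) θ) :=
        Finset.sum_congr rfl fun i _ => map_T_mu0_withDensity_p hα i
    _ = ∑ i, mu0.withDensity fun θ => ENNReal.ofReal (p α i θ) :=
        Equiv.sum_comp (Equiv.swap 0 2) fun i => mu0.withDensity fun θ => ENNReal.ofReal (p α i θ)
    _ = mu0 := by
        rw [← withDensity_finsetSum _ _ fun i _ => (measurable_p α i).ennreal_ofReal]
        simp only [hsum, ← Pi.one_def, withDensity_one]

lemma lintegral_stepMeasure (α : ℝ) (ν : Measure ℝ) {g : ℝ → ℝ≥0∞} (hg : Measurable g) :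
    ∫⁻ θ, g θ ∂stepMeasure α ν = ∑ i, ∫⁻ θ, g (T α i θ) * ENNReal.ofReal (p α i θ) ∂ν := by
  rw [stepMeasure, lintegral_finsetSum_measure]
  refine Finset.sum_congr rfl fun i _ => ?_
  rw [lintegral_map hg (measurable_T α i)]
  exact (lintegral_withDensity_eq_lintegral_mul _ (measurable_p α i).ennreal_ofReal
    (hg.comp (measurable_T α i))).trans (lintegral_congr fun θ => mul_comm _ _)

theorem prod_apply_eq_sum_lintegral_of_stepMeasure_eq {α : ℝ} {lam ν : Measure ℝ} [SFinite lam]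
    [SFinite ν] (hν : stepMeasure α ν = ν) {F : ℝ × ℝ → ℝ × ℝ}
    (hF : MeasurePreserving F (lam.prod ν) (lam.prod ν)) {E : Set (ℝ × ℝ)} (hE : MeasurableSet E) :
    (lam.prod ν) E =
      ∑ i : Fin 4, ∫⁻ θ, (∫⁻ s,
        Set.indicator E (fun _ => (1 : ℝ≥0∞)) ((F (s, θ)).1, T α i (F (s, θ)).2) *
          ENNReal.ofReal (p α i (F (s, θ)).2) ∂lam) ∂ν := by
  set φ : Fin 4 → ℝ × ℝ → ℝ≥0∞ := fun i q =>
    E.indicator (fun _ => 1) (q.1, T α i q.2) * ENNReal.ofReal (p α i q.2)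
  have hφ (i : Fin 4) : Measurable (φ i) :=
    ((measurable_const.indicator hE).comp
      (measurable_fst.prodMk ((measurable_T α i).comp measurable_snd))).mul
      ((measurable_p α i).comp measurable_snd).ennreal_ofReal
  have hsection (s : ℝ) : Measurable fun θ => E.indicator (fun _ => (1 : ℝ≥0∞)) (s, θ) :=
    (measurable_const.indicator hE).comp measurable_prodMk_left
  calc (lam.prod ν) E = ∫⁻ s, ∫⁻ θ, E.indicator (fun _ => 1) (s, θ) ∂ν ∂lam := by
        rw [← lintegral_indicator_one hE,
          lintegral_prod _ (measurable_one.indicator hE).aemeasurable]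
        rfl
    _ = ∫⁻ s, ∫⁻ θ, E.indicator (fun _ => 1) (s, θ) ∂(stepMeasure α ν) ∂lam := by rw [hν]
    _ = ∫⁻ s, ∑ i, ∫⁻ θ, φ i (s, θ) ∂ν ∂lam := by
        simp only [lintegral_stepMeasure α ν (hsection _)]; rfl
    _ = ∑ i, ∫⁻ s, ∫⁻ θ, φ i (s, θ) ∂ν ∂lam :=
        lintegral_finsetSum _ fun i _ => (hφ i).lintegral_prod_right'
    _ = ∑ i, ∫⁻ q, φ i q ∂(lam.prod ν) :=
        Finset.sum_congr rfl fun i _ => (lintegral_prod _ (hφ i).aemeasurable).symm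
    _ = _ := Finset.sum_congr rfl fun i _ => (hF.lintegral_lintegral_comp (hφ i)).symm

end RandomBilliard

open RandomBilliard

theorem prod_measure_invariant_for_Tbar_comp_F_general (α : ℝ) (hα : α ∈ Set.Ioo 0 (π / 6))
    (L : ℝ) (lam : Measure ℝ)
    (hlam : lam = (ENNReal.ofReal L)⁻¹ • volume.restrict (Set.Icc 0 L))
    (F : ℝ × ℝ → ℝ × ℝ)
    (hF : MeasurePreserving F (lam.prod mu0) (lam.prod mu0))
    (E : Set (ℝ × ℝ)) (hE : MeasurableSet E) :
    (lam.prod mu0) E =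
      ∑ i : Fin 4, ∫⁻ θ, (∫⁻ s,
        Set.indicator E (fun _ => (1 : ℝ≥0∞)) ((F (s, θ)).1, T α i (F (s, θ)).2) *
          ENNReal.ofReal (p α i (F (s, θ)).2) ∂lam) ∂mu0 := by
  have : SFinite lam := hlam ▸ inferInstance
  exact prod_apply_eq_sum_lintegral_of_stepMeasure_eq (stepMeasure_mu0 hα) hF hE

/-- if the deterministic billiard map `F(s, θ) = (s₁(s,θ), θ₁(s,θ))`
preserves `λ × μ`, then `λ × μ` is invariant for the random billiard map
`F̄(s, θ) = (s₁(s,θ), T_i(θ₁(s,θ)))` with probability `p_i(θ₁(s,θ))`. -/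
theorem prod_measure_invariant_for_Tbar_comp_F (α : ℝ) (hα : α ∈ Set.Ioo 0 (π / 6))
    (L : ℝ) (hL : 0 < L) (lam : Measure ℝ)
    (hlam : lam = (ENNReal.ofReal L)⁻¹ • volume.restrict (Set.Icc 0 L))
    (F : ℝ × ℝ → ℝ × ℝ)
    (hF : MeasurePreserving F (lam.prod mu0) (lam.prod mu0))
    (hFrange : ∀ q ∈ Set.Icc 0 L ×ˢ Set.Icc 0 π, F q ∈ Set.Icc 0 L ×ˢ Set.Icc 0 π)
    (E : Set (ℝ × ℝ)) (hE : MeasurableSet E)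
    (hEsub : E ⊆ Set.Icc 0 L ×ˢ Set.Icc 0 π) :
    (lam.prod mu0) E =
      ∑ i : Fin 4, ∫⁻ θ, (∫⁻ s,
        Set.indicator E (fun _ => (1 : ℝ≥0∞)) ((F (s, θ)).1, T α i (F (s, θ)).2) *
          ENNReal.ofReal (p α i (F (s, θ)).2) ∂lam) ∂mu0 :=
  prod_measure_invariant_for_Tbar_comp_F_general α hα L lam hlam F hF E hE
end
end

section
/- Let α = βπ with β ∈ (0, 1/6), and let θ ∈ (0, π − 2α) be such that (θ + α)/π is irrational. Then the alternating sequence x = (1,3,1,3,1,3,…) belongs to Σ_θ, and for every s ∈ [0,2π) the corresponding orbit of the random billiard map in the circle is dense in the boundary: the sequence (s + 2Σ_{k=1}^n T_x^{(k)}(θ) mod 2π)_{n≥1} is dense in [0,2π); in particular, its even-time subsequence equals (s + 4n(θ+α) mod 2π)_{n≥1}. -/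
open Real MeasureTheory Set Filter Topology
open scoped ENNReal NNReal

noncomputable section

open RandomBilliard

private lemma upos_aux {a t : ℝ} (ha : 0 < a) (ha2 : a < π/2) (ht : 0 < t) (ht2 : t < π - a) :
    0 < u a t := by
  have hta : 0 < Real.tan a := Real.tan_pos_of_pos_of_lt_pi_div_two ha ha2
  unfold u
  rcases lt_trichotomy t (π/2) with h | h | h
  · have htt : 0 < Real.tan t := Real.tan_pos_of_pos_of_lt_pi_div_two ht h
    have := div_pos hta htt
    nlinarith
  · rw [h, Real.tan_pi_div_two, div_zero]; norm_num
  · have h3 : Real.tan a < Real.tan (π - t) :=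
      Real.tan_lt_tan_of_lt_of_lt_pi_div_two (by linarith) (by linarith) (by linarith)
    have hT : 0 < Real.tan (π - t) := lt_trans hta h3
    have htan : Real.tan t = -Real.tan (π - t) := by
      have := Real.tan_pi_sub t; linarith
    rw [htan]
    have h5 : Real.tan a / Real.tan (π - t) < 1 := (div_lt_one hT).mpr h3
    have h6 : Real.tan a / -Real.tan (π - t) = -(Real.tan a / Real.tan (π - t)) := by ring
    rw [h6]; nlinarith

private lemma uneg_aux {a t : ℝ} (ha : 0 < a) (ha2 : a < π/2) (h1 : a < t) (h2 : t < π) :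
    0 < u a (-t) := by
  have hta : 0 < Real.tan a := Real.tan_pos_of_pos_of_lt_pi_div_two ha ha2
  unfold u
  rw [Real.tan_neg]
  rcases lt_trichotomy t (π/2) with h | h | h
  · have htt : 0 < Real.tan t := Real.tan_pos_of_pos_of_lt_pi_div_two (by linarith) h
    have h3 : Real.tan a < Real.tan t :=
      Real.tan_lt_tan_of_lt_of_lt_pi_div_two (by linarith) h h1
    have h5 : Real.tan a / Real.tan t < 1 := (div_lt_one htt).mpr h3
    have h6 : Real.tan a / -Real.tan t = -(Real.tan a / Real.tan t) := by ring
    rw [h6]; nlinarith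
  · rw [h, Real.tan_pi_div_two, neg_zero, div_zero]; norm_num
  · have hT : 0 < Real.tan (π - t) :=
      Real.tan_pos_of_pos_of_lt_pi_div_two (by linarith) (by linarith)
    have htan : Real.tan t = -Real.tan (π - t) := by
      have := Real.tan_pi_sub t; linarith
    rw [htan, neg_neg]
    have := div_pos hta hT
    nlinarith

private lemma ap_hits {ρ a : ℝ} (hρ : 0 < ρ) (ha : ρ ≤ a) :
    ∃ k : ℕ, 1 ≤ k ∧ a ≤ (k : ℝ) * ρ ∧ (k : ℝ) * ρ < a + ρ := by
  have h1 : (1:ℝ) ≤ a / ρ := (one_le_div hρ).mpr ha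
  have h2 : (1:ℤ) ≤ ⌈a / ρ⌉ := by exact_mod_cast h1.trans (Int.le_ceil _)
  have hc : ((⌈a / ρ⌉.toNat : ℕ) : ℝ) = ((⌈a / ρ⌉ : ℤ) : ℝ) := by
    exact_mod_cast Int.toNat_of_nonneg (by omega)
  refine ⟨⌈a / ρ⌉.toNat, by omega, ?_, ?_⟩
  · rw [hc]
    exact (div_le_iff₀ hρ).mp (Int.le_ceil _)
  · rw [hc]
    have h3 := Int.ceil_lt_add_one (a / ρ)
    have h4 : a / ρ * ρ = a := div_mul_cancel₀ a hρ.ne'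
    nlinarith

private lemma small_step {c : ℝ} (hc : Irrational (c / (2 * π))) {ε : ℝ} (hε : 0 < ε) :
    ∃ (N : ℕ) (r : ℝ) (j : ℤ), 1 ≤ N ∧ (N : ℝ) * c = r + (j : ℝ) * (2 * π) ∧
      r ≠ 0 ∧ |r| < ε := by
  set g : ℕ → ℝ := fun n => toIcoMod Real.two_pi_pos 0 ((n : ℝ) * c) with hg
  have hmem : ∀ n, g n ∈ Set.Icc 0 (2 * π) := by
    intro n
    have h := toIcoMod_mem_Ico Real.two_pi_pos 0 ((n : ℝ) * c)
    rw [zero_add] at h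
    exact ⟨h.1, h.2.le⟩
  obtain ⟨a, -, φ, hφ, hconv⟩ := isCompact_Icc.tendsto_subseq hmem
  rw [Metric.tendsto_atTop] at hconv
  obtain ⟨i0, hi0⟩ := hconv (ε / 2) (by linarith)
  set n := φ i0 with hn
  set m := φ (i0 + 1) with hm
  have hnm : n < m := hφ (Nat.lt_succ_self i0)
  have h1 := hi0 i0 le_rfl
  have h2 := hi0 (i0 + 1) (Nat.le_succ i0)
  simp only [Function.comp_apply, Real.dist_eq] at h1 h2
  rw [← hn] at h1
  rw [← hm] at h2
  have hdist : |g m - g n| < ε := by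
    rw [abs_lt] at *
    constructor <;> linarith [h1.1, h1.2, h2.1, h2.2]
  have hgm : g m = (m : ℝ) * c - (toIcoDiv Real.two_pi_pos 0 ((m : ℝ) * c)) • (2 * π) := rfl
  have hgn : g n = (n : ℝ) * c - (toIcoDiv Real.two_pi_pos 0 ((n : ℝ) * c)) • (2 * π) := rfl
  rw [zsmul_eq_mul] at hgm hgn
  set dm := toIcoDiv Real.two_pi_pos 0 ((m : ℝ) * c)
  set dn := toIcoDiv Real.two_pi_pos 0 ((n : ℝ) * c)
  refine ⟨m - n, g m - g n, dm - dn, by omega, ?_, ?_, hdist⟩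
  · have hcast : ((m - n : ℕ) : ℝ) = (m : ℝ) - (n : ℝ) := by
      push_cast [Nat.cast_sub hnm.le]; ring
    rw [hcast]
    push_cast
    linarith [hgm, hgn]
  · intro h0
    have hNc : ((m : ℝ) - (n : ℝ)) * c = ((dm : ℝ) - (dn : ℝ)) * (2 * π) := by
      have := sub_eq_zero.mp h0
      nlinarith [hgm, hgn]
    apply hc
    refine ⟨((dm - dn : ℤ) : ℚ) / ((m - n : ℕ) : ℚ), ?_⟩
    have hmn0 : ((m - n : ℕ) : ℝ) ≠ 0 := by
      have : 0 < m - n := by omega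
      positivity
    have hcastmn : ((m - n : ℕ) : ℝ) = (m : ℝ) - (n : ℝ) := by
      push_cast [Nat.cast_sub hnm.le]; ring
    push_cast
    rw [hcastmn, div_eq_div_iff (by rwa [hcastmn] at hmn0) Real.two_pi_pos.ne']
    linear_combination -hNc

/-- for `α = βπ`, `β ∈ (0, 1/6)`, and `θ ∈ (0, π - 2α)` with `(θ+α)/π`
irrational, the alternating sequence `x = (1,3,1,3,…)` lies in `Σ_θ`, for every
`s ∈ [0, 2π)` the corresponding orbit of the random billiard map in the circle is dense
in the boundary, and its even-time subsequence equals `s + 4n(θ+α) mod 2π`. -/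
theorem alternating_orbit_dense (α β : ℝ) (hβ : β ∈ Set.Ioo 0 (1 / 6 : ℝ))
    (hαβ : α = β * π) (θ : ℝ) (hθ : θ ∈ Set.Ioo 0 (π - 2 * α))
    (hirr : Irrational ((θ + α) / π))
    (x : ℕ → Fin 4) (hx : ∀ k : ℕ, x k = if k % 2 = 0 then (0 : Fin 4) else 2) :
    x ∈ SigmaTheta α θ ∧
    ∀ s ∈ Set.Ico 0 (2 * π),
      (Set.Ico 0 (2 * π) ⊆ closure (Set.range fun n : ℕ =>
        toIcoMod Real.two_pi_pos 0
          (s + 2 * ∑ k ∈ Finset.Icc 1 (n + 1), iterT α x k θ))) ∧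
      (∀ n : ℕ, 1 ≤ n →
        toIcoMod Real.two_pi_pos 0
            (s + 2 * ∑ k ∈ Finset.Icc 1 (2 * n), iterT α x k θ) =
          toIcoMod Real.two_pi_pos 0 (s + 4 * (n : ℝ) * (θ + α))) := by
  have hπ : 0 < π := Real.pi_pos
  have hα0 : 0 < α := by rw [hαβ]; exact mul_pos hβ.1 hπ
  have hα6 : α < π / 6 := by rw [hαβ]; nlinarith [hβ.2]
  have hθ0 : 0 < θ := hθ.1
  have hθ2 : θ < π - 2 * α := hθ.2
  -- iterates
  have hiter : ∀ k, iterT α x k θ = if k % 2 = 0 then θ else θ + 2 * α := by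
    intro k
    induction k with
    | zero => simp [iterT]
    | succ k ih =>
      rcases Nat.mod_two_eq_zero_or_one k with h | h
      · have hx' : x k = 0 := by rw [hx k, if_pos h]
        have h' : (k + 1) % 2 = 1 := by omega
        show T α (x k) (iterT α x k θ) = _
        rw [hx', ih, if_pos h, h', if_neg (by norm_num : ¬(1 = 0))]
        rfl
      · have hx' : x k = 2 := by rw [hx k, if_neg (by omega)]
        have h' : (k + 1) % 2 = 0 := by omega
        show T α (x k) (iterT α x k θ) = _
        rw [hx', ih, if_neg (by omega), h', if_pos rfl]
        show θ + 2 * α - 2 * α = θ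
        ring
  -- positivity of the two probabilities used
  have hp0 : 0 < p α 0 θ := by
    show 0 < (if θ < α then 1
      else if θ < π - 3 * α then u α θ
      else if θ < π - 2 * α then 2 * Real.cos (2 * α) * u (2 * α) θ
      else 0)
    split_ifs with h1 h2
    · exact one_pos
    · exact upos_aux hα0 (by linarith) hθ0 (by linarith)
    · have hcos : 0 < Real.cos (2 * α) :=
        Real.cos_pos_of_mem_Ioo ⟨by linarith, by linarith⟩
      have := upos_aux (by linarith : (0:ℝ) < 2 * α) (by linarith) hθ0 (by linarith)
      positivity
  have hp2 : 0 < p α 2 (θ + 2 * α) := by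
    show 0 < (if θ + 2 * α < 2 * α then 0
      else if θ + 2 * α < 3 * α then 2 * Real.cos (2 * α) * u (2 * α) (-(θ + 2 * α))
      else if θ + 2 * α < π - α then u α (-(θ + 2 * α))
      else 1)
    split_ifs with h1 h2
    · linarith
    · have hcos : 0 < Real.cos (2 * α) :=
        Real.cos_pos_of_mem_Ioo ⟨by linarith, by linarith⟩
      have := uneg_aux (by linarith : (0:ℝ) < 2 * α) (by linarith)
        (by linarith : 2 * α < θ + 2 * α) (by linarith)
      positivity
    · exact uneg_aux hα0 (by linarith) (by linarith) (by linarith)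
    · exact one_pos
  -- sums at even times
  have hsum : ∀ n : ℕ, ∑ k ∈ Finset.Icc 1 (2 * n), iterT α x k θ = 2 * (n : ℝ) * (θ + α) := by
    intro n
    induction n with
    | zero => simp
    | succ n ih =>
      have e1 : 2 * (n + 1) = (2 * n + 1) + 1 := by ring
      rw [e1, Finset.sum_Icc_succ_top (by omega), Finset.sum_Icc_succ_top (by omega), ih,
        hiter (2 * n + 1), hiter (2 * n + 1 + 1), if_neg (by omega), if_pos (by omega)]
      push_cast
      ring
  constructor
  · -- membership in Σ_θ
    intro k
    apply Finset.prod_pos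
    intro j _
    rw [hx j, hiter j]
    rcases Nat.mod_two_eq_zero_or_one j with h | h
    · rw [if_pos h, if_pos h]; exact hp0
    · rw [if_neg (by omega), if_neg (by omega)]; exact hp2
  · intro s hs
    constructor
    · -- density
      intro y hy
      have hcirr : Irrational (4 * (θ + α) / (2 * π)) := by
        have h2 : Irrational ((2 : ℕ) * ((θ + α) / π)) := hirr.natCast_mul (by norm_num)
        have he : 4 * (θ + α) / (2 * π) = (2 : ℕ) * ((θ + α) / π) := by
          push_cast
          field_simp
          ring
        rw [he]
        exact h2
      rw [Metric.mem_closure_iff]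
      intro ε hε
      set ε' : ℝ := min ε (2 * π - y) / 2 with hε'def
      have hε'0 : 0 < ε' := by
        have : 0 < 2 * π - y := by linarith [hy.2]
        have := lt_min hε this
        positivity
      have hε'ε : ε' < ε := by
        have : min ε (2 * π - y) ≤ ε := min_le_left _ _
        linarith
      have hε'y : y + ε' < 2 * π := by
        have : min ε (2 * π - y) ≤ 2 * π - y := min_le_right _ _
        linarith [hy.2, hε'0]
      obtain ⟨N, r, j, hN1, hNc, hr0, hrε⟩ := small_step hcirr hε'0
      -- find k, m with s + k r - m(2π) ∈ [y, y + ε')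
      have hkz : ∃ (k : ℕ) (m : ℤ), 1 ≤ k ∧ y ≤ s + (k : ℝ) * r - (m : ℝ) * (2 * π) ∧
          s + (k : ℝ) * r - (m : ℝ) * (2 * π) < y + ε' := by
        rcases hr0.lt_or_gt with hneg | hpos
        · -- r < 0
          have hρ : 0 < -r := by linarith
          have hρε : -r < ε' := by rw [abs_of_neg hneg] at hrε; exact hrε
          set m : ℤ := ⌊(s - y - 2 * (-r)) / (2 * π)⌋ with hmdef
          have hm : (m : ℝ) * (2 * π) ≤ s - y - 2 * (-r) :=
            (le_div_iff₀ Real.two_pi_pos).mp (Int.floor_le _)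
          have hB : 2 * (-r) ≤ s - y - (m : ℝ) * (2 * π) := by linarith
          obtain ⟨k, hk1, hk2, hk3⟩ := ap_hits hρ
            (by linarith : -r ≤ (s - y - (m : ℝ) * (2 * π)) - (-r))
          refine ⟨k, m, hk1, by nlinarith, by nlinarith⟩
        · -- r > 0
          set m : ℤ := ⌈(r + s - y) / (2 * π)⌉ with hmdef
          have hm : r + s - y ≤ (m : ℝ) * (2 * π) :=
            (div_le_iff₀ Real.two_pi_pos).mp (Int.le_ceil _)
          have hρε : r < ε' := by rw [abs_of_pos hpos] at hrε; exact hrε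
          obtain ⟨k, hk1, hk2, hk3⟩ := ap_hits hpos
            (by linarith : r ≤ y - s + (m : ℝ) * (2 * π))
          refine ⟨k, m, hk1, by nlinarith, by nlinarith⟩
      obtain ⟨k, m, hk1, hz1, hz2⟩ := hkz
      set z : ℝ := s + (k : ℝ) * r - (m : ℝ) * (2 * π) with hzdef
      have hkN : 1 ≤ k * N := Nat.one_le_iff_ne_zero.mpr (by positivity)
      refine ⟨z, ⟨2 * (k * N) - 1, ?_⟩, ?_⟩
      · have hidx : 2 * (k * N) - 1 + 1 = 2 * (k * N) := by omega
        beta_reduce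
        rw [hidx, hsum (k * N)]
        rw [toIcoMod_eq_iff]
        refine ⟨⟨by linarith [hy.1], by rw [zero_add]; linarith⟩, m + (k : ℤ) * j, ?_⟩
        rw [zsmul_eq_mul]
        push_cast
        linear_combination (k : ℝ) * hNc
      · rw [Real.dist_eq, abs_lt]
        constructor <;> linarith
    · -- even-time subsequence
      intro n _
      rw [hsum n]
      congr 1
      ring
end
end

section
/- The Lyapunov exponent of the random billiard map in the circle is zero: for every θ ∈ (0,π), every x ∈ Σ_θ, and every nonzero vector v = (v_1, v_2) ∈ ℝ², setting σ_1 = σ_3 = 1, σ_2 = σ_4 = −1, B_n = ∏_{k=1}^n σ_{x_k}, and A_n = 2 Σ_{k=1}^n ∏_{j=1}^k σ_{x_j}, one has lim_{n→∞} (1/n) log ‖(v_1 + A_n v_2, B_n v_2)‖ = 0, where (v_1 + A_n v_2, B_n v_2) is the image of v under the derivative of the n-th random iterate of the random billiard map in the circle along x. -/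
open Real MeasureTheory Set Filter Topology
open scoped ENNReal NNReal

noncomputable section

open RandomBilliard

/-- the Lyapunov exponent of the random billiard map in the circle is
zero: with `σ_1 = σ_3 = 1`, `σ_2 = σ_4 = -1`, `B_n = Π_{k=1}^n σ_{x_k}` and
`A_n = 2Σ_{k=1}^n Π_{j=1}^k σ_{x_j}`, one has
`(1/n) log ‖(v₁ + A_n v₂, B_n v₂)‖ → 0` for every nonzero `(v₁, v₂)`. -/
theorem lyapunov_circle_zero (α : ℝ) (hα : α ∈ Set.Ioo 0 (π / 6))
    (θ : ℝ) (hθ : θ ∈ Set.Ioo 0 π) (x : ℕ → Fin 4) (hx : x ∈ SigmaTheta α θ)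
    (v₁ v₂ : ℝ) (hv : (v₁, v₂) ≠ (0, 0))
    (σ : Fin 4 → ℝ) (hσ0 : σ 0 = 1) (hσ1 : σ 1 = -1) (hσ2 : σ 2 = 1) (hσ3 : σ 3 = -1)
    (A B : ℕ → ℝ)
    (hB : ∀ n : ℕ, B n = ∏ k ∈ Finset.range n, σ (x k))
    (hA : ∀ n : ℕ, A n = 2 * ∑ k ∈ Finset.range n, ∏ j ∈ Finset.range (k + 1), σ (x j)) :
    Tendsto (fun n : ℕ =>
        (1 / (n : ℝ)) * Real.log (Real.sqrt ((v₁ + A n * v₂) ^ 2 + (B n * v₂) ^ 2)))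
      atTop (nhds 0) := by
  have hσabs : ∀ i : Fin 4, |σ i| = 1 := by
    intro i; fin_cases i <;> simp [hσ0, hσ1, hσ2, hσ3]
  have hBabs : ∀ n, |B n| = 1 := by
    intro n
    rw [hB n, Finset.abs_prod]
    simp [hσabs]
  have hAabs : ∀ n : ℕ, |A n| ≤ 2 * n := by
    intro n
    rw [hA n, abs_mul, abs_two]
    have h1 : |∑ k ∈ Finset.range n, ∏ j ∈ Finset.range (k + 1), σ (x j)| ≤ n := by
      calc |∑ k ∈ Finset.range n, ∏ j ∈ Finset.range (k + 1), σ (x j)|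
          ≤ ∑ k ∈ Finset.range n, |∏ j ∈ Finset.range (k + 1), σ (x j)| :=
            Finset.abs_sum_le_sum_abs _ _
        _ = ∑ k ∈ Finset.range n, (1 : ℝ) := by
            apply Finset.sum_congr rfl
            intro k _
            rw [Finset.abs_prod]
            simp [hσabs]
        _ = n := by simp
    nlinarith
  set N : ℕ → ℝ := fun n => Real.sqrt ((v₁ + A n * v₂) ^ 2 + (B n * v₂) ^ 2) with hN
  set c : ℝ := if v₂ = 0 then |v₁| else |v₂| with hc
  set C : ℝ := |v₁| + 3 * |v₂| + 1 with hCdef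
  have hcpos : 0 < c := by
    rw [hc]
    split_ifs with h
    · subst h
      have : v₁ ≠ 0 := by simpa using hv
      exact abs_pos.mpr this
    · exact abs_pos.mpr h
  have hCpos : 0 < C := by positivity
  have hlow : ∀ n, c ≤ N n := by
    intro n
    rw [hc]
    split_ifs with h
    · subst h
      have : N n = |v₁| := by
        simp [hN, Real.sqrt_sq_eq_abs]
      rw [this]
    · have h1 : (B n * v₂) ^ 2 ≤ (v₁ + A n * v₂) ^ 2 + (B n * v₂) ^ 2 := by
        nlinarith [sq_nonneg (v₁ + A n * v₂)]
      have h2 : |v₂| = Real.sqrt ((B n * v₂) ^ 2) := by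
        rw [Real.sqrt_sq_eq_abs, abs_mul, hBabs n, one_mul]
      rw [h2]
      exact Real.sqrt_le_sqrt h1
  have hup : ∀ n : ℕ, 1 ≤ n → N n ≤ C * n := by
    intro n hn
    have hn1 : (1 : ℝ) ≤ n := by exact_mod_cast hn
    have ha : |v₁ + A n * v₂| ≤ |v₁| + 2 * n * |v₂| := by
      calc |v₁ + A n * v₂| ≤ |v₁| + |A n * v₂| := abs_add_le _ _
        _ = |v₁| + |A n| * |v₂| := by rw [abs_mul]
        _ ≤ |v₁| + 2 * n * |v₂| := by
            have := hAabs n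
            nlinarith [abs_nonneg v₂]
    have hb : |B n * v₂| = |v₂| := by rw [abs_mul, hBabs n, one_mul]
    have hsum : N n ≤ |v₁ + A n * v₂| + |B n * v₂| := by
      have h1 : (v₁ + A n * v₂) ^ 2 + (B n * v₂) ^ 2
          ≤ (|v₁ + A n * v₂| + |B n * v₂|) ^ 2 := by
        nlinarith [abs_nonneg (v₁ + A n * v₂), abs_nonneg (B n * v₂),
          sq_abs (v₁ + A n * v₂), sq_abs (B n * v₂)]
      calc N n ≤ Real.sqrt ((|v₁ + A n * v₂| + |B n * v₂|) ^ 2) := Real.sqrt_le_sqrt h1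
        _ = |v₁ + A n * v₂| + |B n * v₂| :=
            Real.sqrt_sq (by positivity)
    calc N n ≤ |v₁ + A n * v₂| + |B n * v₂| := hsum
      _ ≤ |v₁| + 2 * n * |v₂| + |v₂| := by rw [hb]; linarith
      _ ≤ C * n := by
          rw [hCdef]
          nlinarith [abs_nonneg v₁, abs_nonneg v₂]
  -- squeeze
  have hLlim : Tendsto (fun n : ℕ => Real.log c / n) atTop (nhds 0) :=
    tendsto_const_div_atTop_nhds_zero_nat _
  have hlog : Tendsto (fun n : ℕ => Real.log n / n) atTop (nhds 0) :=
    (Real.isLittleO_log_id_atTop.tendsto_div_nhds_zero).comp tendsto_natCast_atTop_atTop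
  have hUlim : Tendsto (fun n : ℕ => (Real.log C + Real.log n) / n) atTop (nhds 0) := by
    have := hLlim.add hlog
    · simp only [add_div] at *
      simpa using (tendsto_const_div_atTop_nhds_zero_nat (Real.log C)).add hlog
  refine tendsto_of_tendsto_of_tendsto_of_le_of_le' hLlim hUlim ?_ ?_
  · filter_upwards [eventually_ge_atTop 1] with n hn
    have hnpos : (0 : ℝ) < n := by exact_mod_cast hn
    have h1 : Real.log c ≤ Real.log (N n) :=
      Real.log_le_log hcpos (hlow n)
    have e : (1 / (n : ℝ)) * Real.log (N n) = Real.log (N n) / n := by ring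
    rw [e]
    gcongr
  · filter_upwards [eventually_ge_atTop 1] with n hn
    have hnpos : (0 : ℝ) < n := by exact_mod_cast hn
    have hNpos : 0 < N n := lt_of_lt_of_le hcpos (hlow n)
    have h1 : Real.log (N n) ≤ Real.log C + Real.log n := by
      have := Real.log_le_log hNpos (hup n hn)
      rwa [Real.log_mul (ne_of_gt hCpos) (ne_of_gt hnpos)] at this
    have e : (1 / (n : ℝ)) * Real.log (N n) = Real.log (N n) / n := by ring
    rw [e]
    gcongr
end
end

section
/- Suppose α = (m/n)π for positive integers m, n (with α ∈ (0,π/6)). Let θ_0 ∈ (0,π), let x ∈ Σ_{θ_0}, and write θ_k = T_x^{(k)}(θ_0) ∈ C(θ_0) ⊆ (0,π). Let L > 0, let (l_k)_{k≥1} be any sequence of reals with 0 < l_k ≤ L, let (ε_k)_{k≥1} be any sequence in {−1, +1}, and set M_k = [[−1, ε_k l_k / sin(θ_k)], [0, −1]]. Then for every nonzero v ∈ ℝ², lim_{n→∞} (1/n) log ‖M_n M_{n−1} ⋯ M_1 v‖ = 0; i.e., the Lyapunov exponent of the random billiard map in the infinite pipeline is zero when α/π is rational. -/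
open Real MeasureTheory Set Filter Topology
open scoped ENNReal NNReal

noncomputable section

namespace RandomBilliard

lemma orbit_form (α : ℝ) (m n : ℕ) (hn : 0 < n) (hrat : α = (m : ℝ) / (n : ℝ) * π)
    (x : ℕ → Fin 4) (θ₀ : ℝ) :
    ∀ k, ∃ e t : ℤ, (e = 1 ∨ e = -1) ∧ iterT α x k θ₀ = e * θ₀ + t * (π / n) := by
  have hn0 : (n : ℝ) ≠ 0 := Nat.cast_ne_zero.2 hn.ne'
  have h2a : 2 * α = (2 * m : ℤ) * (π / n) := by
    rw [hrat]; push_cast; field_simp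
  have h2pi : 2 * π = (2 * n : ℤ) * (π / n) := by
    push_cast; field_simp
  intro k
  induction k with
  | zero => exact ⟨1, 0, Or.inl rfl, by simp [iterT]⟩
  | succ k ih =>
    obtain ⟨e, t, he, ht⟩ := ih
    rcases hxk : x k with ⟨v, hv⟩
    interval_cases v
    · exact ⟨e, t + 2 * m, he, by
        show T α (x k) _ = _
        rw [hxk]; show iterT α x k θ₀ + 2 * α = _
        rw [ht, h2a]; push_cast; ring⟩
    · exact ⟨-e, -t + 2 * n - 4 * m, by rcases he with h | h <;> simp [h], by
        show T α (x k) _ = _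
        rw [hxk]; show -iterT α x k θ₀ + 2 * π - 4 * α = _
        rw [ht]
        have : 4 * α = (4 * m : ℤ) * (π / n) := by rw [hrat]; push_cast; field_simp
        rw [h2pi, this]; push_cast; ring⟩
    · exact ⟨e, t - 2 * m, he, by
        show T α (x k) _ = _
        rw [hxk]; show iterT α x k θ₀ - 2 * α = _
        rw [ht, h2a]; push_cast; ring⟩
    · exact ⟨-e, -t + 4 * m, by rcases he with h | h <;> simp [h], by
        show T α (x k) _ = _
        rw [hxk]; show -iterT α x k θ₀ + 4 * α = _
        rw [ht]
        have : 4 * α = (4 * m : ℤ) * (π / n) := by rw [hrat]; push_cast; field_simp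
        rw [this]; push_cast; ring⟩

lemma sin_reduce (θ₀ : ℝ) (n : ℕ) (hn : 0 < n) (e t : ℤ) (he : e = 1 ∨ e = -1) :
    ∃ r ∈ Finset.range (2 * n),
      |Real.sin (e * θ₀ + t * (π / n))| = |Real.sin (θ₀ + (r : ℝ) * (π / n))| := by
  have hn0 : (n : ℝ) ≠ 0 := Nat.cast_ne_zero.2 hn.ne'
  set s : ℤ := e * t with hs
  have h1 : |Real.sin (e * θ₀ + t * (π / n))| = |Real.sin (θ₀ + (s : ℝ) * (π / n))| := by
    rcases he with h | h
    · simp [hs, h]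
    · have : (e : ℝ) * θ₀ + t * (π / n) = -(θ₀ + (s : ℝ) * (π / n)) := by
        rw [hs, h]; push_cast; ring
      rw [this, Real.sin_neg, abs_neg]
  have h2n : (0 : ℤ) < 2 * n := by positivity
  refine ⟨(s % (2 * n)).toNat, ?_, ?_⟩
  · rw [Finset.mem_range]
    have := Int.emod_lt_of_pos s h2n
    have := Int.emod_nonneg s h2n.ne'
    omega
  · rw [h1]
    have hmod : θ₀ + (s : ℝ) * (π / n)
        = θ₀ + ((s % (2 * n)).toNat : ℝ) * (π / n) + (s / (2 * n) : ℤ) * (2 * π) := by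
      have h0 := Int.emod_nonneg s h2n.ne'
      have hint : s = s % (2*n) + s / (2*n) * (2*n) := by
        have := Int.emod_add_mul_ediv s (2*n); linarith
      have hdiv : (s : ℝ) = ((s % (2*n)).toNat : ℝ) + (s / (2*n) : ℤ) * (2 * n) := by
        have h0' : (((s % (2*n)).toNat : ℕ) : ℝ) = ((s % (2*n) : ℤ) : ℝ) := by
          exact_mod_cast congrArg (Int.cast : ℤ → ℝ) (Int.toNat_of_nonneg h0)
        rw [h0']
        exact_mod_cast hint
      rw [hdiv]; field_simp; ring
    rw [hmod, Real.sin_add_int_mul_two_pi]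


lemma bound_exists (θ₀ : ℝ) (n : ℕ) (hn : 0 < n) (hs : 0 < Real.sin θ₀) :
    ∃ C : ℝ, 0 < C ∧ ∀ r ∈ Finset.range (2 * n),
      |Real.sin (θ₀ + (r : ℝ) * (π / n))|⁻¹ ≤ C := by
  classical
  set f : ℕ → ℝ := fun r => |Real.sin (θ₀ + (r : ℝ) * (π / n))|⁻¹ with hf
  have hne : ((Finset.range (2 * n)).image f).Nonempty :=
    Finset.Nonempty.image ⟨0, Finset.mem_range.2 (by omega)⟩ _
  refine ⟨((Finset.range (2 * n)).image f).max' hne, ?_, ?_⟩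
  · have h0 : f 0 ≤ ((Finset.range (2 * n)).image f).max' hne :=
      Finset.le_max' _ _ (Finset.mem_image_of_mem f (Finset.mem_range.2 (by omega)))
    have h1 : 0 < f 0 := by
      simp only [hf, Nat.cast_zero, zero_mul, add_zero]
      exact inv_pos.2 (abs_pos.2 hs.ne')
    linarith
  · intro r hr
    exact Finset.le_max' _ _ (Finset.mem_image_of_mem f hr)

lemma key_lyap (a : ℕ → ℝ) (K : ℝ) (hK : 0 < K) (haK : ∀ k, |a k| ≤ K)
    (P : ℕ → Matrix (Fin 2) (Fin 2) ℝ) (hP0 : P 0 = 1)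
    (hP : ∀ k : ℕ, P (k + 1) = !![(-1 : ℝ), a (k + 1); 0, -1] * P k)
    (v : Fin 2 → ℝ) (hv : v ≠ 0) :
    Tendsto (fun j : ℕ => (1 / (j : ℝ)) * Real.log ‖(P j).mulVec v‖)
      atTop (nhds 0) := by
  set S : ℕ → ℝ := fun j => -∑ k ∈ Finset.range j, a (k + 1) with hSdef
  have hSK : ∀ j : ℕ, |S j| ≤ j * K := by
    intro j
    have h0 : S j = -∑ k ∈ Finset.range j, a (k + 1) := rfl
    rw [h0, abs_neg]
    calc |∑ k ∈ Finset.range j, a (k + 1)| ≤ ∑ k ∈ Finset.range j, |a (k + 1)| :=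
          Finset.abs_sum_le_sum_abs _ _
      _ ≤ (Finset.range j).card • K := Finset.sum_le_card_nsmul _ _ _ fun k _ => haK (k + 1)
      _ = j * K := by simp [nsmul_eq_mul]
  have hPj : ∀ j, P j = !![(-1 : ℝ) ^ j, (-1 : ℝ) ^ j * S j; 0, (-1 : ℝ) ^ j] := by
    intro j
    induction j with
    | zero =>
      rw [hP0, Matrix.one_fin_two]
      have h0 : S 0 = 0 := by simp [hSdef]
      rw [h0]; norm_num
    | succ j ih =>
      rw [hP j, ih, Matrix.mul_fin_two]
      have hSsucc : S (j + 1) = S j - a (j + 1) := by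
        show -∑ k ∈ Finset.range (j + 1), a (k + 1) = _
        rw [Finset.sum_range_succ]; ring
      rw [hSsucc]
      ext i k
      fin_cases i <;> fin_cases k <;> simp [pow_succ] <;> ring
  have hw : ∀ j, (P j).mulVec v
      = ![(-1 : ℝ) ^ j * (v 0 + S j * v 1), (-1 : ℝ) ^ j * v 1] := by
    intro j
    rw [hPj j]
    ext i
    fin_cases i <;>
      simp [Matrix.mulVec, dotProduct, Fin.sum_univ_two] <;> ring
  have hvpos : (0 : ℝ) < ‖v‖ := norm_pos_iff.2 hv
  have habs1 : ∀ j : ℕ, |(-1 : ℝ) ^ j| = 1 := fun j => by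
    rw [abs_pow, abs_neg, abs_one, one_pow]
  have hsq : ∀ j : ℕ, (-1 : ℝ) ^ j * (-1 : ℝ) ^ j = 1 := fun j => by
    rw [← pow_add, ← two_mul, pow_mul]; norm_num
  have hn0 : |v 0| ≤ ‖v‖ := norm_le_pi_norm v 0
  have hn1 : |v 1| ≤ ‖v‖ := norm_le_pi_norm v 1
  have hup : ∀ j, ‖(P j).mulVec v‖ ≤ (1 + |S j|) * ‖v‖ := by
    intro j
    have h1 : (0 : ℝ) ≤ (1 + |S j|) * ‖v‖ := by positivity
    rw [pi_norm_le_iff_of_nonneg h1]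
    intro i
    rw [hw j]
    fin_cases i
    · show ‖(-1 : ℝ) ^ j * (v 0 + S j * v 1)‖ ≤ _
      rw [Real.norm_eq_abs, abs_mul, habs1, one_mul]
      calc |v 0 + S j * v 1| ≤ |v 0| + |S j| * |v 1| := by
            refine (abs_add_le _ _).trans ?_; rw [abs_mul]
        _ ≤ ‖v‖ + |S j| * ‖v‖ := by gcongr
        _ = (1 + |S j|) * ‖v‖ := by ring
    · show ‖(-1 : ℝ) ^ j * v 1‖ ≤ _
      rw [Real.norm_eq_abs, abs_mul, habs1, one_mul]
      nlinarith [abs_nonneg (S j)]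
  have hlo : ∀ j, ‖v‖ ≤ (1 + |S j|) * ‖(P j).mulVec v‖ := by
    intro j
    set w := (P j).mulVec v with hwd
    have hw0 : w 0 = (-1 : ℝ) ^ j * (v 0 + S j * v 1) := by rw [hwd, hw j]; rfl
    have hw1 : w 1 = (-1 : ℝ) ^ j * v 1 := by rw [hwd, hw j]; rfl
    have hm0 : |w 0| ≤ ‖w‖ := norm_le_pi_norm w 0
    have hm1 : |w 1| ≤ ‖w‖ := norm_le_pi_norm w 1
    have hv1 : v 1 = (-1 : ℝ) ^ j * w 1 := by rw [hw1, ← mul_assoc, hsq, one_mul]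
    have hv0 : v 0 = (-1 : ℝ) ^ j * w 0 - S j * v 1 := by
      rw [hw0, ← mul_assoc, hsq]; ring
    rw [pi_norm_le_iff_of_nonneg (by positivity)]
    intro i
    fin_cases i
    · show ‖v 0‖ ≤ _
      rw [Real.norm_eq_abs, hv0, hv1]
      calc |(-1 : ℝ) ^ j * w 0 - S j * ((-1 : ℝ) ^ j * w 1)|
          ≤ |(-1 : ℝ) ^ j * w 0| + |S j * ((-1 : ℝ) ^ j * w 1)| := abs_sub _ _
        _ = |w 0| + |S j| * |w 1| := by
            rw [abs_mul, abs_mul, abs_mul, habs1]; ring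
        _ ≤ ‖w‖ + |S j| * ‖w‖ := by gcongr
        _ = (1 + |S j|) * ‖w‖ := by ring
    · show ‖v 1‖ ≤ _
      rw [Real.norm_eq_abs, hv1, abs_mul, habs1, one_mul]
      nlinarith [abs_nonneg (S j), norm_nonneg w]
  have hwpos : ∀ j, (0 : ℝ) < ‖(P j).mulVec v‖ := by
    intro j
    rcases mul_pos_iff.1 (lt_of_lt_of_le hvpos (hlo j)) with ⟨_, h⟩ | ⟨h1, _⟩
    · exact h
    · exfalso; nlinarith [abs_nonneg (S j)]
  have hB : ∀ j : ℕ, (0 : ℝ) < 1 + |S j| := fun j => by positivity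
  have hBle : ∀ j : ℕ, 1 + |S j| ≤ 1 + (j : ℝ) * K := fun j => by linarith [hSK j]
  have hjb : ∀ j : ℕ, (0 : ℝ) < 1 + (j : ℝ) * K := fun j =>
    lt_of_lt_of_le (hB j) (hBle j)
  have hlog : ∀ j : ℕ,
      |Real.log ‖(P j).mulVec v‖ - Real.log ‖v‖| ≤ Real.log (1 + (j : ℝ) * K) := by
    intro j
    have hlogB : Real.log (1 + |S j|) ≤ Real.log (1 + (j : ℝ) * K) :=
      Real.log_le_log (hB j) (hBle j)
    rw [abs_sub_le_iff]
    constructor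
    · have h1 : Real.log ‖(P j).mulVec v‖ ≤ Real.log ((1 + |S j|) * ‖v‖) :=
        Real.log_le_log (hwpos j) (hup j)
      rw [Real.log_mul (hB j).ne' hvpos.ne'] at h1
      linarith
    · have h1 : Real.log ‖v‖ ≤ Real.log ((1 + |S j|) * ‖(P j).mulVec v‖) :=
        Real.log_le_log hvpos (hlo j)
      rw [Real.log_mul (hB j).ne' (hwpos j).ne'] at h1
      linarith
  have hmain : ∀ j : ℕ, (1 / (j : ℝ)) * Real.log ‖(P j).mulVec v‖
      = (1 / (j : ℝ)) * Real.log ‖v‖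
        + (1 / (j : ℝ)) * (Real.log ‖(P j).mulVec v‖ - Real.log ‖v‖) := fun j => by ring
  have h1 : Tendsto (fun j : ℕ => (1 / (j : ℝ)) * Real.log ‖v‖) atTop (nhds 0) := by
    simpa [div_eq_mul_inv, one_div, mul_comm] using
      tendsto_const_div_atTop_nhds_zero_nat (Real.log ‖v‖)
  have hg : Tendsto (fun j : ℕ => (1 / (j : ℝ)) * Real.log (1 + (j : ℝ) * K))
      atTop (nhds 0) := by
    have ht : Tendsto (fun j : ℕ => 1 + (j : ℝ) * K) atTop atTop :=
      tendsto_atTop_add_const_left _ 1 (tendsto_natCast_atTop_atTop.atTop_mul_const hK)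
    have h2 : (fun j : ℕ => Real.log (1 + (j : ℝ) * K))
        =o[atTop] (fun j : ℕ => 1 + (j : ℝ) * K) :=
      Real.isLittleO_log_id_atTop.comp_tendsto ht
    have h3 : (fun j : ℕ => 1 + (j : ℝ) * K) =O[atTop] (fun j : ℕ => (j : ℝ)) := by
      rw [Asymptotics.isBigO_iff]
      refine ⟨1 + K, Filter.eventually_atTop.2 ⟨1, fun j hj => ?_⟩⟩
      have hj1 : (1 : ℝ) ≤ (j : ℝ) := by exact_mod_cast hj
      rw [Real.norm_eq_abs, Real.norm_eq_abs, abs_of_pos (hjb j),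
        abs_of_pos (by linarith : (0 : ℝ) < (j : ℝ))]
      nlinarith
    have h4 := (h2.trans_isBigO h3).tendsto_div_nhds_zero
    simpa [div_eq_mul_inv, one_div, mul_comm] using h4
  have h2 : Tendsto (fun j : ℕ =>
      (1 / (j : ℝ)) * (Real.log ‖(P j).mulVec v‖ - Real.log ‖v‖)) atTop (nhds 0) := by
    refine squeeze_zero_norm (fun j => ?_) hg
    rw [Real.norm_eq_abs, abs_mul, abs_of_nonneg (by positivity : (0 : ℝ) ≤ 1 / (j : ℝ))]
    exact mul_le_mul_of_nonneg_left (hlog j) (by positivity)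
  have := (h1.add h2).congr fun j => (hmain j).symm
  simpa using this

end RandomBilliard

open RandomBilliard

/-- if `α = (m/n)π` is rational, the Lyapunov exponent of the random
billiard map in the infinite pipeline is zero: for the matrices
`M_k = [[-1, ε_k l_k / sin θ_k], [0, -1]]` along an admissible orbit, and every
nonzero `v`, `(1/n) log ‖M_n ⋯ M_1 v‖ → 0`. -/
theorem lyapunov_pipeline_zero (α : ℝ) (hα : α ∈ Set.Ioo 0 (π / 6))
    (m n : ℕ) (hm : 0 < m) (hn : 0 < n) (hrat : α = (m : ℝ) / (n : ℝ) * π)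
    (θ₀ : ℝ) (hθ₀ : θ₀ ∈ Set.Ioo 0 π) (x : ℕ → Fin 4) (hx : x ∈ SigmaTheta α θ₀)
    (L : ℝ) (hL : 0 < L) (l : ℕ → ℝ) (hl : ∀ k : ℕ, 0 < l k ∧ l k ≤ L)
    (ε : ℕ → ℝ) (hε : ∀ k : ℕ, ε k = 1 ∨ ε k = -1)
    (M : ℕ → Matrix (Fin 2) (Fin 2) ℝ)
    (hM : ∀ k : ℕ, M k = !![(-1 : ℝ), ε k * l k / Real.sin (iterT α x k θ₀); 0, -1])
    (P : ℕ → Matrix (Fin 2) (Fin 2) ℝ)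
    (hP0 : P 0 = 1) (hP : ∀ k : ℕ, P (k + 1) = M (k + 1) * P k)
    (v : Fin 2 → ℝ) (hv : v ≠ 0) :
    Tendsto (fun j : ℕ => (1 / (j : ℝ)) * Real.log ‖(P j).mulVec v‖)
      atTop (nhds 0) := by
  have hn0 : (n : ℝ) ≠ 0 := Nat.cast_ne_zero.2 hn.ne'
  have hθ0pos : 0 < Real.sin θ₀ := Real.sin_pos_of_pos_of_lt_pi hθ₀.1 hθ₀.2
  obtain ⟨C, hCpos, hCmem⟩ := bound_exists θ₀ n hn hθ0pos
  have hsinC : ∀ k : ℕ, |Real.sin (iterT α x k θ₀)|⁻¹ ≤ C := by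
    intro k
    obtain ⟨e, t, he, ht⟩ := orbit_form α m n hn hrat x θ₀ k
    obtain ⟨r, hr, hrs⟩ := sin_reduce θ₀ n hn e t he
    rw [ht, hrs]
    exact hCmem r hr
  have haK : ∀ k : ℕ, |ε k * l k / Real.sin (iterT α x k θ₀)| ≤ L * C := by
    intro k
    have hε1 : |ε k| = 1 := by rcases hε k with h | h <;> simp [h]
    have h1 : |ε k * l k / Real.sin (iterT α x k θ₀)|
        = l k * |Real.sin (iterT α x k θ₀)|⁻¹ := by
      rw [abs_div, abs_mul, hε1, one_mul, abs_of_pos (hl k).1, div_eq_mul_inv]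
    rw [h1]
    exact mul_le_mul (hl k).2 (hsinC k) (by positivity) hL.le
  exact key_lyap (fun k => ε k * l k / Real.sin (iterT α x k θ₀)) (L * C)
    (mul_pos hL hCpos) haK P hP0 (fun k => by rw [hP k, hM (k + 1)]) v hv
end
end
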